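/- arXiv:2512.20315 — 3 statements merged into one kernel-verified Lean document; each statement's English description precedes it below -/
import Mathlib

section
/- Let S = Y ∩ Z ⊆ ℙ⁴ be a smooth intersection of a smooth hyperquadric Y with a hypercubic Z, and let D ⊆ S be a reduced curve of degree d and arithmetic genus g that is NOT the complete intersection of S with another hypersurface. Then g ≤ B(d) ≤ (d² − 1)/12, where B(d) = (d² − r²)/12 if d ≡ r (mod 6) with r ∈ {−2, −1, 1, 2, 3}, and B(d) = d²/12 − 1 if d ≡ 0 (mod 6). -/
/-!
Write `d = 6k + r` with `-2 ≤ r ≤ 3` and put `E = D - k • H`, a class of degree `r` with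
`E² = D² - 2kd + 6k²`; so a bound on `E²` is a bound on the genus of `D`. If `r ≠ 0`, then
`E² ≤ -2`: otherwise Riemann–Roch makes `E` or `-E` effective of degree at most `3`, and such
classes have `E² ≤ -2`. If `r = 0`, the Hodge index theorem gives `E = 0`, i.e. `D = kH` is a
complete intersection, or `E² ≤ -4`.
-/

/-- The bound `B(d)`: `B(d) = (d² − r²)/12` if `d ≡ r (mod 6)` with
`r ∈ {−2, −1, 1, 2, 3}`, and `B(d) = d²/12 − 1` if `6 ∣ d`.
(All the divisions are exact.) -/
def Bbound (d : ℤ) : ℤ :=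
  if d % 6 = 0 then d ^ 2 / 12 - 1
  else if d % 6 = 1 ∨ d % 6 = 5 then (d ^ 2 - 1) / 12
  else if d % 6 = 2 ∨ d % 6 = 4 then (d ^ 2 - 4) / 12
  else (d ^ 2 - 9) / 12

theorem Bbound_six_mul (k : ℤ) : Bbound (6 * k) = 3 * k ^ 2 - 1 := by
  rw [Bbound, if_pos (by omega), show (6 * k) ^ 2 = 12 * (3 * k ^ 2) by ring,
    Int.mul_ediv_cancel_left _ (by norm_num)]

theorem Bbound_six_mul_add {r : ℤ} (k : ℤ) (hr₀ : r ≠ 0) (hr₁ : -2 ≤ r) (hr₂ : r ≤ 3) :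
    Bbound (6 * k + r) = 3 * k ^ 2 + r * k := by
  have hdiv : ((6 * k + r) ^ 2 - r ^ 2) / 12 = 3 * k ^ 2 + r * k := by
    rw [show (6 * k + r) ^ 2 - r ^ 2 = 12 * (3 * k ^ 2 + r * k) by ring,
      Int.mul_ediv_cancel_left _ (by norm_num)]
  rw [← hdiv, Bbound]
  interval_cases r <;> split_ifs <;> omega

theorem exists_eq_six_mul_add (d : ℤ) : ∃ k r, d = 6 * k + r ∧ -2 ≤ r ∧ r ≤ 3 :=
  ⟨(d + 2) / 6, d - 6 * ((d + 2) / 6), by ring, by omega, by omega⟩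

theorem twelve_mul_Bbound_le (d : ℤ) : 12 * Bbound d ≤ d ^ 2 - 1 := by
  obtain ⟨k, r, rfl, hr₁, hr₂⟩ := exists_eq_six_mul_add d
  rcases eq_or_ne r 0 with rfl | hr₀
  · rw [add_zero, Bbound_six_mul]; nlinarith
  · rw [Bbound_six_mul_add k hr₀ hr₁ hr₂]
    have hr_sq : 1 ≤ r ^ 2 := by nlinarith [sq_pos_of_ne_zero hr₀]
    nlinarith

section IntersectionForm

variable {M : Type*} [AddCommGroup M] (B : M →ₗ[ℤ] M →ₗ[ℤ] ℤ)

theorem apply_sub_smul_self (hsymm : ∀ a b : M, B a b = B b a) (x y : M) (k : ℤ) :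
    B (x - k • y) (x - k • y) = B x x - 2 * k * B y x + k ^ 2 * B y y := by
  simp only [map_sub, map_smul, LinearMap.sub_apply, LinearMap.smul_apply, smul_eq_mul,
    hsymm x y]
  ring

theorem apply_self_le_neg_two_of_abs_le_three {H : M} {Eff : Set M}
    (hRReff : ∀ D' : M, 0 ≤ B H D' → -4 < B D' D' → D' ∈ Eff)
    (hlow : ∀ D' ∈ Eff, 1 ≤ B H D' → B H D' ≤ 3 → B D' D' ≤ -2)
    {E : M} (h₁ : 1 ≤ |B H E|) (h₃ : |B H E| ≤ 3) : B E E ≤ -2 := by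
  wlog hE : 0 ≤ B H E generalizing E
  · simpa using this (E := -E) (by simpa using h₁) (by simpa using h₃) (by rw [map_neg]; omega)
  rw [abs_of_nonneg hE] at h₁ h₃
  by_contra! h
  exact h.not_ge (hlow E (hRReff E hE (by omega)) h₁ h₃)

end IntersectionForm

theorem genus_bound_on_sextic_K3_general
    (M : Type*) [AddCommGroup M]
    (B : M →ₗ[ℤ] M →ₗ[ℤ] ℤ) (hsymm : ∀ a b : M, B a b = B b a)
    (HS : M) (hH6 : B HS HS = 6)
    (Eff : Set M)
    (hRReff : ∀ D' : M, 0 ≤ B HS D' → -4 < B D' D' → D' ∈ Eff)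
    (hHodge : ∀ D' : M, B HS D' = 0 → -4 < B D' D' → D' = 0)
    (hlow : ∀ D' ∈ Eff, 1 ≤ B HS D' → B HS D' ≤ 3 → B D' D' ≤ -2)
    (D : M)
    (g : ℤ) (hg : 2 * g - 2 = B D D)
    (d : ℤ) (hd : d = B HS D) (hd1 : 1 ≤ d)
    (hnotCI : ¬ ∃ e : ℤ, 0 < e ∧ D = e • HS) :
    g ≤ Bbound d ∧ 12 * Bbound d ≤ d ^ 2 - 1 := by
  refine ⟨?_, twelve_mul_Bbound_le d⟩
  obtain ⟨k, r, rfl, hr₁, hr₂⟩ := exists_eq_six_mul_add d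
  set E := D - k • HS
  have hEdeg : B HS E = r := by simp only [E, map_sub, map_smul, hH6, ← hd, Int.zsmul_eq_mul]; ring
  have hEsq : B E E = B D D - 2 * k * (6 * k + r) + 6 * k ^ 2 := by
    rw [apply_sub_smul_self B hsymm, hH6, ← hd]; ring
  rcases eq_or_ne r 0 with rfl | hr₀
  · have hE : E ≠ 0 := fun h ↦ hnotCI ⟨k, by omega, sub_eq_zero.mp h⟩
    have hEsq_le : B E E ≤ -4 := by
      by_contra! h
      exact hE (hHodge E hEdeg h)
    rw [add_zero, Bbound_six_mul]
    nlinarith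
  · have hEsq_le : B E E ≤ -2 := apply_self_le_neg_two_of_abs_le_three B hRReff hlow
      (by rw [hEdeg, le_abs]; omega) (by rw [hEdeg, abs_le]; omega)
    rw [Bbound_six_mul_add k hr₀ hr₁ hr₂]
    nlinarith

/-- let `S = Y ∩ Z ⊆ ℙ⁴` be a smooth intersection of a smooth
hyperquadric `Y` with a hypercubic `Z` (a smooth sextic K3 surface with
hyperplane class `HS`, `HS² = 6`, and `2 p_a − 2 = D²` since `K_S = 0`), and
let `D ⊆ S` be a reduced curve of degree `d ≥ 1` and arithmetic genus `g`
which is NOT the complete intersection of `S` with another hypersurface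
(i.e. `D ≠ e·HS` in `Pic S` for every `e > 0`).  Then
`g ≤ B(d) ≤ (d² − 1)/12`.
The hypotheses encode: Riemann–Roch effectivity (`H·D' ≥ 0`, `D'² > −4` ⇒
`D'` effective), the Hodge-index fact, and that every effective class of
degree between 1 and 3 on `S ⊆ Y` has genus ≤ 0, i.e. square ≤ −2. -/
theorem genus_bound_on_sextic_K3
    (M : Type*) [AddCommGroup M]
    (B : M →ₗ[ℤ] M →ₗ[ℤ] ℤ) (hsymm : ∀ a b : M, B a b = B b a)
    (HS : M) (hH6 : B HS HS = 6)
    (Eff : Set M)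
    (hRReff : ∀ D' : M, 0 ≤ B HS D' → -4 < B D' D' → D' ∈ Eff)
    (hHodge : ∀ D' : M, B HS D' = 0 → -4 < B D' D' → D' = 0)
    (hlow : ∀ D' ∈ Eff, 1 ≤ B HS D' → B HS D' ≤ 3 → B D' D' ≤ -2)
    (D : M) (hD : D ∈ Eff)
    (g : ℤ) (hg : 2 * g - 2 = B D D)
    (d : ℤ) (hd : d = B HS D) (hd1 : 1 ≤ d)
    (hnotCI : ¬ ∃ e : ℤ, 0 < e ∧ D = e • HS) :
    g ≤ Bbound d ∧ 12 * Bbound d ≤ d ^ 2 - 1 :=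
  genus_bound_on_sextic_K3_general M B hsymm HS hH6 Eff hRReff hHodge hlow D g hg d hd hd1 hnotCI
end

section
/- Let S be a smooth degree-6 K3 surface in ℙ⁴ containing a smooth irreducible curve C of genus g and degree d, and suppose Pic(S) = ℤH ⊕ ℤC where H is the hyperplane class (H² = 6, H·C = d, C² = 2g − 2). Then S contains a line (i.e., an effective divisor L with H·L = 1 and L² = −2) if and only if d ≡ ±1 (mod 6) and g = (d² − 1)/12; moreover, such a line is unique, given by L = aH + bC with b = 1 if d ≡ 1 (mod 6), b = −1 if d ≡ 5 (mod 6), and a = (1 − db)/6. -/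
/-!
A class `L = aH + bC` with `H·L = 1` and `L² = −2` satisfies
`H²·L² = (H·L)² − b²(d² − 12g + 12)`, i.e. `b²(d² − 12g + 12) = 13`. As `13` is squarefree,
`b = ±1`, which forces `12g = d² − 1`, and `6a = 1 − db` then pins down `d mod 6` and `a`.
Conversely that class has degree `1` and square `−2`, so Riemann–Roch makes it effective.
-/

/-- The intersection form on `Pic S = ℤH ⊕ ℤC` of a smooth sextic K3 surface
containing a smooth irreducible curve `C` of genus `g` and degree `d`:
a class `aH + bC` is encoded as the pair `(a, b)`, and
`H² = 6`, `H·C = d`, `C² = 2g − 2`. -/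
def interForm (d g : ℤ) (p q : ℤ × ℤ) : ℤ :=
  6 * p.1 * q.1 + d * (p.1 * q.2 + p.2 * q.1) + (2 * g - 2) * p.2 * q.2

theorem Int.eq_one_or_neg_one_of_mul_self_dvd_prime {p b : ℤ} (hp : Prime p) (h : b * b ∣ p) :
    b = 1 ∨ b = -1 :=
  Int.isUnit_iff.mp (hp.squarefree b h)

namespace interForm

variable (d g : ℤ)

def IsLineClass (L : ℤ × ℤ) : Prop :=
  interForm d g (1, 0) L = 1 ∧ interForm d g L L = -2

theorem hyperplane_left (L : ℤ × ℤ) : interForm d g (1, 0) L = 6 * L.1 + d * L.2 := by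
  simp only [interForm]
  ring

theorem six_mul_self (L : ℤ × ℤ) :
    6 * interForm d g L L = interForm d g (1, 0) L ^ 2 - (d ^ 2 - 12 * g + 12) * L.2 ^ 2 := by
  simp only [interForm]
  ring

variable {d g}

theorem IsLineClass.snd_eq_one_or_neg_one_and_genus {L : ℤ × ℤ} (hL : IsLineClass d g L) :
    (L.2 = 1 ∨ L.2 = -1) ∧ 12 * g = d ^ 2 - 1 := by
  have h13 : L.2 * L.2 * (d ^ 2 - 12 * g + 12) = 13 := by
    have := six_mul_self d g L
    rw [hL.1, hL.2] at this
    linarith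
  have hb : L.2 = 1 ∨ L.2 = -1 := Int.eq_one_or_neg_one_of_mul_self_dvd_prime
    (Int.prime_iff_natAbs_prime.mpr (by norm_num)) ⟨_, h13.symm⟩
  refine ⟨hb, ?_⟩
  have hb2 : L.2 * L.2 = 1 := by rcases hb with h | h <;> rw [h] <;> norm_num
  rw [hb2] at h13
  linarith

theorem isLineClass_of_snd_eq_one_or_neg_one {a b : ℤ} (hb : b = 1 ∨ b = -1)
    (hdeg : 6 * a + d * b = 1) (hg : 12 * g = d ^ 2 - 1) : IsLineClass d g (a, b) := by
  have hdeg' : interForm d g (1, 0) (a, b) = 1 := by rw [hyperplane_left]; exact hdeg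
  refine ⟨hdeg', ?_⟩
  have := six_mul_self d g (a, b)
  rcases hb with rfl | rfl <;> rw [hdeg'] at this <;> linarith

theorem isLineClass_iff (L : ℤ × ℤ) :
    IsLineClass d g L ↔ ((d % 6 = 1 ∨ d % 6 = 5) ∧ 12 * g = d ^ 2 - 1) ∧
      L = ((1 - d * (if d % 6 = 1 then 1 else -1)) / 6, if d % 6 = 1 then (1 : ℤ) else -1) := by
  constructor
  · intro hL
    obtain ⟨hb, hg⟩ := hL.snd_eq_one_or_neg_one_and_genus
    have hdeg := hyperplane_left d g L
    rw [hL.1] at hdeg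
    obtain ⟨a, b⟩ := L
    dsimp only at hb hdeg
    rcases hb with rfl | rfl
    · have hd : d % 6 = 1 := by omega
      refine ⟨⟨Or.inl hd, hg⟩, ?_⟩
      simp only [hd, if_true, Prod.mk.injEq, and_true]
      omega
    · have hd : d % 6 = 5 := by omega
      refine ⟨⟨Or.inr hd, hg⟩, ?_⟩
      norm_num [hd]
      omega
  · rintro ⟨⟨hd, hg⟩, rfl⟩
    rcases hd with hd | hd <;> simp only [hd] <;> norm_num <;>
      exact isLineClass_of_snd_eq_one_or_neg_one (by omega) (by omega) hg

end interForm

open interForm in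
theorem line_in_sextic_K3_general
    (d g : ℤ)
    (Eff : Set (ℤ × ℤ))
    (hRR : ∀ L : ℤ × ℤ, 0 < interForm d g (1, 0) L →
      interForm d g L L = -2 → L ∈ Eff) :
    ((∃ L : ℤ × ℤ, L ∈ Eff ∧ interForm d g (1, 0) L = 1 ∧
        interForm d g L L = -2) ↔
      ((d % 6 = 1 ∨ d % 6 = 5) ∧ 12 * g = d ^ 2 - 1)) ∧
    (∀ L : ℤ × ℤ, L ∈ Eff → interForm d g (1, 0) L = 1 →
      interForm d g L L = -2 →
      L = ((1 - d * (if d % 6 = 1 then 1 else -1)) / 6,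
            if d % 6 = 1 then (1 : ℤ) else -1)) := by
  refine ⟨⟨fun ⟨L, _, hdeg, hself⟩ => ((isLineClass_iff L).mp ⟨hdeg, hself⟩).1, fun h => ?_⟩,
    fun L _ hdeg hself => ((isLineClass_iff L).mp ⟨hdeg, hself⟩).2⟩
  obtain ⟨hdeg, hself⟩ := (isLineClass_iff _).mpr ⟨h, rfl⟩
  exact ⟨_, hRR _ (by rw [hdeg]; exact one_pos) hself, hdeg, hself⟩

/-- with `Pic S = ℤH ⊕ ℤC` as above (`H = (1,0)`, `C = (0,1)`),
`S` contains a line — an effective class `L` with `H·L = 1` and `L² = −2` —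
if and only if `d ≡ ±1 (mod 6)` and `g = (d² − 1)/12`; moreover such a line
is unique, given by `L = aH + bC` with `b = 1` if `d ≡ 1 (mod 6)`, `b = −1`
if `d ≡ 5 (mod 6)`, and `a = (1 − d·b)/6`.
The hypothesis `hRR` encodes Riemann–Roch on the K3 surface: a class of
positive degree and square −2 is effective. -/
theorem line_in_sextic_K3
    (d g : ℤ) (hd : 1 ≤ d) (hg : 0 ≤ g)
    (Eff : Set (ℤ × ℤ))
    (hCeff : ((0 : ℤ), (1 : ℤ)) ∈ Eff)
    (hRR : ∀ L : ℤ × ℤ, 0 < interForm d g (1, 0) L →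
      interForm d g L L = -2 → L ∈ Eff) :
    ((∃ L : ℤ × ℤ, L ∈ Eff ∧ interForm d g (1, 0) L = 1 ∧
        interForm d g L L = -2) ↔
      ((d % 6 = 1 ∨ d % 6 = 5) ∧ 12 * g = d ^ 2 - 1)) ∧
    (∀ L : ℤ × ℤ, L ∈ Eff → interForm d g (1, 0) L = 1 →
      interForm d g L L = -2 →
      L = ((1 - d * (if d % 6 = 1 then 1 else -1)) / 6,
            if d % 6 = 1 then (1 : ℤ) else -1)) :=
  line_in_sextic_K3_general d g Eff hRR
end

section
/- Let S be a smooth degree-6 K3 surface in ℙ⁴ with Pic(S) = ℤH ⊕ ℤC, where H is the hyperplane class and C is a smooth irreducible curve of genus g and degree d. If S contains an integral rational cubic curve (effective divisor Γ with H·Γ = 3 and Γ² = −2), then d ≡ 3 (mod 6) and g = (d² − 9)/12. -/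
lemma interForm_hyperplane_left (d g : ℤ) (p : ℤ × ℤ) :
    interForm d g (1, 0) p = 6 * p.1 + d * p.2 := by
  simp only [interForm]
  ring

lemma interForm_hyperplane_sq_sub_six_mul_self (d g : ℤ) (p : ℤ × ℤ) :
    interForm d g (1, 0) p ^ 2 - 6 * interForm d g p p = p.2 ^ 2 * (d ^ 2 - 12 * g + 12) := by
  simp only [interForm]
  ring

lemma Int.eq_one_or_neg_one_of_sq_dvd_of_squarefree {n b : ℤ} (hn : Squarefree n)
    (hb : b ^ 2 ∣ n) : b = 1 ∨ b = -1 :=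
  Int.isUnit_iff.mp (hn b (sq b ▸ hb))

lemma Int.squarefree_twentyOne : Squarefree (21 : ℤ) :=
  Int.squarefree_natCast.mpr (by decide +kernel)

theorem rational_cubic_in_sextic_K3_general
    (d g : ℤ)
    (Eff : Set (ℤ × ℤ))
    (hΓ : ∃ Γ : ℤ × ℤ, Γ ∈ Eff ∧ interForm d g (1, 0) Γ = 3 ∧
      interForm d g Γ Γ = -2) :
    d % 6 = 3 ∧ 12 * g = d ^ 2 - 9 := by
  obtain ⟨Γ, -, hdeg, hself⟩ := hΓ
  have hdisc : Γ.2 ^ 2 * (d ^ 2 - 12 * g + 12) = 21 := by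
    rw [← interForm_hyperplane_sq_sub_six_mul_self, hdeg, hself]
    norm_num
  have hb := Int.eq_one_or_neg_one_of_sq_dvd_of_squarefree Int.squarefree_twentyOne
    (Dvd.intro _ hdisc)
  rw [interForm_hyperplane_left] at hdeg
  rcases hb with hb | hb <;> rw [hb] at hdisc hdeg <;> omega

/-- with `Pic S = ℤH ⊕ ℤC` as above (`H = (1,0)`), if `S`
contains an integral rational cubic — an effective class `Γ` with
`H·Γ = 3` and `Γ² = −2` — then `d ≡ 3 (mod 6)` and `g = (d² − 9)/12`. -/
theorem rational_cubic_in_sextic_K3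
    (d g : ℤ) (hd : 1 ≤ d) (hg : 0 ≤ g)
    (Eff : Set (ℤ × ℤ))
    (hΓ : ∃ Γ : ℤ × ℤ, Γ ∈ Eff ∧ interForm d g (1, 0) Γ = 3 ∧
      interForm d g Γ Γ = -2) :
    d % 6 = 3 ∧ 12 * g = d ^ 2 - 9 :=
  rational_cubic_in_sextic_K3_general d g Eff hΓ
end
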